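/- Let 𝒰 be a universe and (X, L, s) a 𝒰-counting system satisfying (C3), (C4) and (C5). Then the specialization preorder ≤ of the topology of closed subsets is a partial order making X an ordinal system relative to 𝒰. Moreover, under this order: s is the successor function of the ordinal system (s(x) = x⁺ for all x); L(I) = ⋁I = ⋁⁺I whenever L(I) is defined; the limit ordinals of the ordinal system are exactly the elements of the form L(I); and the closure of any I ∈ P_𝒰(X) is Ī = {⋁⁺I}^↧. -/

import Mathlib

namespace Paper

/-- The union `⋃_{i ∈ I} f(i)` of the values of `f` on elements of `I`. -/
noncomputable def unionImage (f : ZFSet → ZFSet) (I : ZFSet) : ZFSet :=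
  ZFSet.sUnion (@ZFSet.image f (Classical.allZFSetDefinable _) I)

/-- A universe: a transitive set closed under pairing and under unions of
`𝒰`-indexed families of elements of `𝒰`. -/
def IsUniverse (U : ZFSet) : Prop :=
  U.IsTransitive ∧
  (∀ x ∈ U, ∀ y ∈ U, ({x, y} : ZFSet) ∈ U) ∧
  (∀ I ∈ U, ∀ f : ZFSet → ZFSet, (∀ i ∈ I, f i ∈ U) → unionImage f I ∈ U)

variable {X : Type*}

/-- `A ∈ P_𝒰(X)`: the subset `A` of the type `X` is in bijection with some element of `𝒰`. -/
def SmallSet (U : ZFSet) (A : Set X) : Prop :=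
  ∃ B : ZFSet, B ∈ U ∧ Nonempty (A ≃ B.toSet)

/-- `x < y` in the sense `x ≤ y ∧ x ≠ y`, for an arbitrary relation `le`. -/
def ltR (le : X → X → Prop) (x y : X) : Prop := le x y ∧ x ≠ y

/-- The lower complement `S^↧ = {x | ∀ y ∈ S, x < y}`. -/
def lowerComp (le : X → X → Prop) (S : Set X) : Set X := {x | ∀ y ∈ S, ltR le x y}

/-- The upper complement `S^↑ = {x | ∀ y ∈ S, y < x}`. -/
def upperComp (le : X → X → Prop) (S : Set X) : Set X := {x | ∀ y ∈ S, ltR le y x}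

/-- `b` is the incremented join `⋁⁺S`, i.e. the minimum of `S^↑`. -/
def IsIncJoin (le : X → X → Prop) (S : Set X) (b : X) : Prop :=
  b ∈ upperComp le S ∧ ∀ c ∈ upperComp le S, le b c

/-- `b = x⁺`, i.e. `b = ⋁⁺{x}`. -/
def IsSuccOf (le : X → X → Prop) (x b : X) : Prop := IsIncJoin le {x} b

/-- `b` is the join (least upper bound) of `S`. -/
def IsJoin (le : X → X → Prop) (S : Set X) (b : X) : Prop :=
  (∀ y ∈ S, le y b) ∧ ∀ c, (∀ y ∈ S, le y c) → le b c

/-- An ordinal system relative to the universe `U`: a partial order satisfying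
(O1) lower complements of nonempty subsets lie in `P_𝒰(X)`, and
(O2) every member of `P_𝒰(X)` has an incremented join. -/
def IsOrdinalSystem (U : ZFSet) (le : X → X → Prop) : Prop :=
  IsPartialOrder X le ∧
  (∀ S : Set X, S.Nonempty → SmallSet U (lowerComp le S)) ∧
  (∀ S : Set X, SmallSet U S → ∃ b, IsIncJoin le S b)

/-- `I` is successor-closed: `s(I) ⊆ I`. -/
def SuccClosed (s : X → X) (I : Set X) : Prop := ∀ x ∈ I, s x ∈ I

/-- The domain of the limit function of a `𝒰`-counting system (axiom (C1)):
the successor-closed members of `P_𝒰(X)`. -/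
def LDom (U : ZFSet) (s : X → X) : Set (Set X) :=
  {I | SuccClosed s I ∧ SmallSet U I}

/-- A subset `J` is closed when `s⁻¹(J) ⊆ J` and `A ⊆ J` whenever `L(A) ∈ J`. -/
def IsClosedSub (U : ZFSet) (s : X → X) (L : ∀ I ∈ LDom U s, X) (J : Set X) : Prop :=
  (∀ x : X, s x ∈ J → x ∈ J) ∧
  (∀ A (h : A ∈ LDom U s), L A h ∈ J → A ⊆ J)

/-- The closure `Ī` of `I` in the topology of closed subsets: the intersection
of all closed subsets containing `I`. -/
def cl (U : ZFSet) (s : X → X) (L : ∀ I ∈ LDom U s, X) (I : Set X) : Set X :=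
  {x | ∀ J : Set X, IsClosedSub U s L J → I ⊆ J → x ∈ J}

/-- `x ≤_s y`: `s^m(x) = y` for some `m ∈ ℕ`. -/
def leS (s : X → X) (x y : X) : Prop := ∃ m : ℕ, s^[m] x = y

/-- `x ≤_L y`: `x ∈ I` and `L(I) = y` for some `I ∈ dom L`. -/
def leL (U : ZFSet) (s : X → X) (L : ∀ I ∈ LDom U s, X) (x y : X) : Prop :=
  ∃ I, ∃ h : I ∈ LDom U s, x ∈ I ∧ L I h = y

/-- The specialization preorder: `x ≤ y` iff `x ∈ cl {y}`. -/
def leSpec (U : ZFSet) (s : X → X) (L : ∀ I ∈ LDom U s, X) (x y : X) : Prop :=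
  x ∈ cl U s L {y}

/-- Axiom (C2): the limit function only depends on the closure of its argument. -/
def C2 (U : ZFSet) (s : X → X) (L : ∀ I ∈ LDom U s, X) : Prop :=
  ∀ I J (hI : I ∈ LDom U s) (hJ : J ∈ LDom U s),
    cl U s L I = cl U s L J → L I hI = L J hJ

/-- Axiom (C3): `s⁻¹{L(I)} = ∅` and `s(L(I)) ∉ I` for all `I ∈ dom L`. -/
def C3 (U : ZFSet) (s : X → X) (L : ∀ I ∈ LDom U s, X) : Prop :=
  ∀ I (h : I ∈ LDom U s), (∀ x : X, s x ≠ L I h) ∧ s (L I h) ∉ I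

/-- Axiom (C4): `s` is injective, and `L(I) = L(J)` implies `Ī = J̄`. -/
def C4 (U : ZFSet) (s : X → X) (L : ∀ I ∈ LDom U s, X) : Prop :=
  Function.Injective s ∧
  ∀ I J (hI : I ∈ LDom U s) (hJ : J ∈ LDom U s),
    L I hI = L J hJ → cl U s L I = cl U s L J

/-- Axiom (C5): the induction axiom. -/
def C5 (U : ZFSet) (s : X → X) (L : ∀ I ∈ LDom U s, X) : Prop :=
  ∀ J : Set X, SuccClosed s J →
    (∀ I (h : I ∈ LDom U s), I ⊆ J → L I h ∈ J) → J = Set.univ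

/-!
The specialization preorder is the reflexive-transitive closure of the steps `x → s x` and
`x → L I` for `x ∈ I`. Axioms (C3)–(C5) make these steps well-founded, which gives antisymmetry,
and by (C5) every element is some `s z` or some `L I`. Comparability follows by well-founded
induction, (C2) entering when two limits `L K` and `L M` have the same closure. The closure of a
small set `S` is the strict down-set of `s m` when `S` has a maximum `m`, and otherwise of
`L (cl S)`, since `cl S` is then successor-closed; that element is `⋁⁺S`. Down-sets are small by
the same induction, the universe being closed under subsets, adjoining an element and small
unions.
-/

open Relation

theorem mem_unionImage {f : ZFSet → ZFSet} {I z : ZFSet} :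
    z ∈ unionImage f I ↔ ∃ i ∈ I, z ∈ f i := by
  simp only [unionImage, ZFSet.mem_sUnion, ZFSet.mem_image]
  constructor
  · rintro ⟨_, ⟨i, hi, rfl⟩, hz⟩
    exact ⟨i, hi, hz⟩
  · rintro ⟨i, hi, hz⟩
    exact ⟨f i, ⟨i, hi, rfl⟩, hz⟩

namespace IsUniverse

variable {U : ZFSet} (hU : IsUniverse U)
include hU

theorem mem_of_mem {B b : ZFSet} (hB : B ∈ U) (hb : b ∈ B) : b ∈ U := hU.1 B hB hb

theorem unionImage_mem {I : ZFSet} (hI : I ∈ U) {f : ZFSet → ZFSet} (hf : ∀ i ∈ I, f i ∈ U) :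
    unionImage f I ∈ U :=
  hU.2.2 I hI f hf

theorem empty_mem {B : ZFSet} (hB : B ∈ U) : (∅ : ZFSet) ∈ U := by
  induction B using ZFSet.inductionOn with
  | _ B ih =>
    obtain rfl | hne := B.eq_empty_or_nonempty
    · exact hB
    · obtain ⟨b, hb⟩ := (ZFSet.nonempty_def B).1 hne
      exact ih b hb (hU.mem_of_mem hB hb)

theorem singleton_mem {b : ZFSet} (hb : b ∈ U) : ({b} : ZFSet) ∈ U := by
  simpa using hU.2.1 b hb b hb

theorem pair_mem {a b : ZFSet} (ha : a ∈ U) (hb : b ∈ U) : a.pair b ∈ U :=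
  hU.2.1 _ (hU.singleton_mem ha) _ (hU.2.1 a ha b hb)

theorem insert_mem {a B : ZFSet} (ha : a ∈ U) (hB : B ∈ U) : insert a B ∈ U := by
  have : unionImage id {{a}, B} = insert a B := by
    ext z
    simp [mem_unionImage, ZFSet.mem_insert_iff]
  rw [← this]
  refine hU.unionImage_mem (hU.2.1 _ (hU.singleton_mem ha) _ hB) fun i hi => ?_
  obtain rfl | rfl := ZFSet.mem_pair.1 hi
  exacts [hU.singleton_mem ha, hB]

theorem image_mem {B : ZFSet} (hB : B ∈ U) (f : ZFSet → ZFSet) (hf : ∀ b ∈ B, f b ∈ U) :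
    @ZFSet.image f (Classical.allZFSetDefinable _) B ∈ U := by
  have : unionImage (fun b => {f b}) B = @ZFSet.image f (Classical.allZFSetDefinable _) B := by
    ext z
    simp only [mem_unionImage, ZFSet.mem_singleton, ZFSet.mem_image, eq_comm]
  rw [← this]
  exact hU.unionImage_mem hB fun b hb => hU.singleton_mem (hf b hb)

theorem subset_mem {B C : ZFSet} (hB : B ∈ U) (hC : C ⊆ B) : C ∈ U := by
  classical
  have : unionImage (fun b => if b ∈ C then {b} else ∅) B = C := by
    ext z
    simp only [mem_unionImage]
    constructor
    · rintro ⟨b, -, hz⟩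
      split_ifs at hz with hbC
      · rwa [ZFSet.mem_singleton.1 hz]
      · exact absurd hz (ZFSet.notMem_empty z)
    · intro hz
      exact ⟨z, hC hz, by simp [hz]⟩
  rw [← this]
  refine hU.unionImage_mem hB fun b hb => ?_
  split_ifs
  exacts [hU.singleton_mem (hU.mem_of_mem hB hb), hU.empty_mem hB]

theorem smallSet_of_injOn {A : Set X} {B : ZFSet} (hB : B ∈ U) {f : X → ZFSet}
    (hf : ∀ a ∈ A, f a ∈ B) (hinj : Set.InjOn f A) : SmallSet U A := by
  classical
  let C := B.sep (· ∈ f '' A)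
  have hC : C.toSet = f '' A := Set.ext fun z =>
    ⟨fun hz => (ZFSet.mem_sep.1 hz).2,
      by rintro ⟨a, ha, rfl⟩; exact ZFSet.mem_sep.2 ⟨hf a ha, a, ha, rfl⟩⟩
  exact ⟨C, hU.subset_mem hB fun z hz => (ZFSet.mem_sep.1 hz).1,
    ⟨(hinj.bijOn_image.equiv f).trans (Equiv.setCongr hC.symm)⟩⟩

end IsUniverse

namespace SmallSet

variable {U : ZFSet}

theorem exists_injOn {A : Set X} (hA : SmallSet U A) :
    ∃ B ∈ U, ∃ f : X → ZFSet, (∀ a ∈ A, f a ∈ B) ∧ Set.InjOn f A := by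
  classical
  obtain ⟨B, hB, ⟨e⟩⟩ := hA
  refine ⟨B, hB, fun x => if h : x ∈ A then e ⟨x, h⟩ else ∅, fun a ha => ?_, ?_⟩
  · simp only [dif_pos ha]
    exact (e ⟨a, ha⟩).2
  · intro a ha b hb hab
    simp only [dif_pos ha, dif_pos hb] at hab
    exact congrArg Subtype.val (e.injective (Subtype.ext hab))

variable (hU : IsUniverse U)
include hU

theorem mono {A A' : Set X} (hA : SmallSet U A) (h : A' ⊆ A) : SmallSet U A' := by
  obtain ⟨B, hB, f, hf, hinj⟩ := hA.exists_injOn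
  exact hU.smallSet_of_injOn hB (fun a ha => hf a (h ha)) (hinj.mono h)

/-- By foundation `B ∉ B`, so `insert B B` has room for one new element. -/
theorem insert {A : Set X} (hA : SmallSet U A) (y : X) : SmallSet U (insert y A) := by
  classical
  by_cases hy : y ∈ A
  · rwa [Set.insert_eq_of_mem hy]
  obtain ⟨B, hB, f, hf, hinj⟩ := hA.exists_injOn
  have hfy : Set.EqOn f (Function.update f y B) A := fun a ha =>
    (Function.update_of_ne (ne_of_mem_of_not_mem ha hy) _ _).symm
  refine hU.smallSet_of_injOn (hU.insert_mem hB hB) (f := Function.update f y B) ?_ ?_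
  · rintro a (rfl | ha)
    · simp
    · rw [← hfy ha]
      exact ZFSet.mem_insert_iff.2 (Or.inr (hf a ha))
  · refine (Set.injOn_insert hy).2 ⟨hinj.congr hfy, ?_⟩
    rintro ⟨a, ha, hfa⟩
    rw [← hfy ha, Function.update_self] at hfa
    exact ZFSet.mem_irrefl B (hfa ▸ hf a ha)

theorem biUnion_zfset {B : ZFSet} (hB : B ∈ U) {F : ZFSet → Set X}
    (hF : ∀ b ∈ B, SmallSet U (F b)) : SmallSet U (⋃ b ∈ B, F b) := by
  choose! C hC f hfC hfinj using fun b hb => (hF b hb).exists_injOn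
  have hD : unionImage (fun b => @ZFSet.image (·.pair b) (Classical.allZFSetDefinable _) (C b)) B
      ∈ U :=
    hU.unionImage_mem hB fun b hb => hU.image_mem (hC b hb) _ fun c hc =>
      hU.pair_mem (hU.mem_of_mem (hC b hb) hc) (hU.mem_of_mem hB hb)
  choose! idx hidx using fun x (hx : x ∈ ⋃ b ∈ B, F b) => Set.mem_iUnion₂.1 hx
  refine hU.smallSet_of_injOn hD (f := fun x => (f (idx x) x).pair (idx x)) ?_ ?_
  · intro x hx
    obtain ⟨hb, hxF⟩ := hidx x hx
    exact mem_unionImage.2 ⟨idx x, hb, (@ZFSet.mem_image _ (Classical.allZFSetDefinable _) _ _).2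
      ⟨f (idx x) x, hfC _ hb x hxF, rfl⟩⟩
  · intro x hx y hy hxy
    obtain ⟨hfxy, hidxy⟩ := ZFSet.pair_injective hxy
    obtain ⟨hb, hxF⟩ := hidx x hx
    exact hfinj _ hb hxF (hidxy ▸ (hidx y hy).2) (hidxy ▸ hfxy)

theorem biUnion {A : Set X} (hA : SmallSet U A) {F : X → Set X}
    (hF : ∀ a ∈ A, SmallSet U (F a)) : SmallSet U (⋃ a ∈ A, F a) := by
  obtain ⟨B, hB, ⟨e⟩⟩ := hA
  let G : ZFSet → Set X := fun b => ⋃ hb : b ∈ B, F (e.symm ⟨b, hb⟩)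
  have hG : ∀ b ∈ B, SmallSet U (G b) := fun b hb => by
    have hGb : G b = F (e.symm ⟨b, hb⟩) := iSup_pos hb
    exact hGb ▸ hF _ (e.symm ⟨b, hb⟩).2
  refine (biUnion_zfset hU hB hG).mono hU fun x hx => ?_
  obtain ⟨a, ha, hxa⟩ := Set.mem_iUnion₂.1 hx
  refine Set.mem_iUnion₂.2 ⟨e ⟨a, ha⟩, (e ⟨a, ha⟩).2, Set.mem_iUnion.2 ⟨(e ⟨a, ha⟩).2, ?_⟩⟩
  simpa using hxa

end SmallSet

theorem lowerComp_singleton (le : X → X → Prop) (b : X) :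
    lowerComp le {b} = {x | ltR le x b} := by
  ext x
  simp [lowerComp]

theorem IsIncJoin.unique {le : X → X → Prop} (antisymm : ∀ {x y}, le x y → le y x → x = y)
    {S : Set X} {b b' : X} (hb : IsIncJoin le S b) (hb' : IsIncJoin le S b') : b = b' :=
  antisymm (hb.2 b' hb'.1) (hb'.2 b hb.1)

def Step (U : ZFSet) (s : X → X) (L : ∀ I ∈ LDom U s, X) (x y : X) : Prop :=
  s x = y ∨ leL U s L x y

section SpecializationOrder

variable {U : ZFSet} {s : X → X} {L : ∀ I ∈ LDom U s, X}

local notation:50 x:51 " ≼ " y:51 => leSpec U s L x y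
local notation:50 x:51 " ≺ " y:51 => ltR (leSpec U s L) x y

theorem isClosedSub_cl (I : Set X) : IsClosedSub U s L (cl U s L I) :=
  ⟨fun x hx J hJ hIJ => hJ.1 x (hx J hJ hIJ),
    fun A h hA _ ha J hJ hIJ => hJ.2 A h (hA J hJ hIJ) ha⟩

theorem subset_cl (I : Set X) : I ⊆ cl U s L I := fun _ hx _ _ hIJ => hIJ hx

theorem cl_subset {I J : Set X} (hJ : IsClosedSub U s L J) (hIJ : I ⊆ J) : cl U s L I ⊆ J :=
  fun _ hx => hx J hJ hIJ

theorem cl_cl (I : Set X) : cl U s L (cl U s L I) = cl U s L I :=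
  (cl_subset (isClosedSub_cl I) subset_rfl).antisymm (subset_cl _)

theorem mem_cl_iff_reflTransGen {I : Set X} {x : X} :
    x ∈ cl U s L I ↔ ∃ y ∈ I, ReflTransGen (Step U s L) x y := by
  constructor
  · intro hx
    refine hx {z | ∃ y ∈ I, ReflTransGen (Step U s L) z y} ⟨?_, ?_⟩ fun y hy => ⟨y, hy, .refl⟩
    · rintro z ⟨y, hy, hzy⟩
      exact ⟨y, hy, .head (Or.inl rfl) hzy⟩
    · rintro A hA ⟨y, hy, hLy⟩ a ha
      exact ⟨y, hy, .head (Or.inr ⟨A, hA, ha, rfl⟩) hLy⟩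
  · rintro ⟨y, hy, hxy⟩
    induction hxy using ReflTransGen.head_induction_on with
    | refl => exact subset_cl I hy
    | head hstep _ ih =>
      obtain rfl | ⟨A, hA, ha, rfl⟩ := hstep
      · exact (isClosedSub_cl I).1 _ ih
      · exact (isClosedSub_cl I).2 A hA ih ha

theorem leSpec_iff_reflTransGen {x y : X} : x ≼ y ↔ ReflTransGen (Step U s L) x y := by
  simp [leSpec, mem_cl_iff_reflTransGen]

theorem mem_cl_iff {I : Set X} {x : X} : x ∈ cl U s L I ↔ ∃ y ∈ I, x ≼ y := by
  simp only [mem_cl_iff_reflTransGen, leSpec_iff_reflTransGen]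

theorem leSpec_refl (x : X) : x ≼ x := leSpec_iff_reflTransGen.2 .refl

theorem leSpec_trans {x y z : X} (hxy : x ≼ y) (hyz : y ≼ z) : x ≼ z :=
  leSpec_iff_reflTransGen.2 ((leSpec_iff_reflTransGen.1 hxy).trans (leSpec_iff_reflTransGen.1 hyz))

theorem leSpec_of_step {x y : X} (h : Step U s L x y) : x ≼ y :=
  leSpec_iff_reflTransGen.2 (.single h)

theorem leSpec_succ (x : X) : x ≼ s x := leSpec_of_step (Or.inl rfl)

theorem leSpec_L_of_mem {I : Set X} {hI : I ∈ LDom U s} {x : X} (hx : x ∈ I) : x ≼ L I hI :=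
  leSpec_of_step (Or.inr ⟨I, hI, hx, rfl⟩)

theorem leSpec_iff_eq_or_exists_step {x y : X} :
    x ≼ y ↔ x = y ∨ ∃ m, x ≼ m ∧ Step U s L m y := by
  simp only [leSpec_iff_reflTransGen]
  refine ⟨fun h => ?_, ?_⟩
  · obtain rfl | ⟨m, hxm, hmy⟩ := h.cases_tail
    exacts [Or.inl rfl, Or.inr ⟨m, hxm, hmy⟩]
  · rintro (rfl | ⟨m, hxm, hmy⟩)
    exacts [.refl, hxm.tail hmy]

theorem succ_le_of_lt {x c : X} (h : x ≺ c) : s x ≼ c := by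
  obtain ⟨hxc, hne⟩ := h
  obtain rfl | ⟨m, hxm, hmc⟩ := (leSpec_iff_reflTransGen.1 hxc).cases_head
  · exact absurd rfl hne
  obtain rfl | ⟨I, hI, hxI, rfl⟩ := hxm
  · exact leSpec_iff_reflTransGen.2 hmc
  -- `I` is successor-closed, so `s x ∈ I` as well
  · exact leSpec_trans (leSpec_L_of_mem (hI.1 x hxI)) (leSpec_iff_reflTransGen.2 hmc)

theorem step_succ_iff (hC3 : C3 U s L) (hs : Function.Injective s) {m z : X} :
    Step U s L m (s z) ↔ m = z := by
  refine ⟨?_, fun h => Or.inl (h ▸ rfl)⟩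
  rintro (h | ⟨I, hI, -, hL⟩)
  exacts [hs h, absurd hL.symm ((hC3 I hI).1 z)]

theorem mem_cl_of_step_L (hC3 : C3 U s L) (hC4 : C4 U s L) {K : Set X} {hK : K ∈ LDom U s}
    {m : X} (h : Step U s L m (L K hK)) : m ∈ cl U s L K := by
  obtain h | ⟨I, hI, hmI, hL⟩ := h
  · exact absurd h ((hC3 K hK).1 m)
  · exact hC4.2 I K hI hK hL ▸ subset_cl I hmI

theorem le_succ_iff (hC3 : C3 U s L) (hs : Function.Injective s) {x z : X} :
    x ≼ s z ↔ x = s z ∨ x ≼ z := by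
  simp only [leSpec_iff_eq_or_exists_step (y := s z), step_succ_iff hC3 hs, exists_eq_right]

theorem le_L_iff (hC3 : C3 U s L) (hC4 : C4 U s L) {K : Set X} {hK : K ∈ LDom U s} {x : X} :
    x ≼ L K hK ↔ x = L K hK ∨ ∃ w ∈ K, x ≼ w := by
  rw [leSpec_iff_eq_or_exists_step]
  refine or_congr_right ⟨fun ⟨m, hxm, hm⟩ => ?_,
    fun ⟨w, hw, hxw⟩ => ⟨w, hxw, Or.inr ⟨K, hK, hw, rfl⟩⟩⟩
  obtain ⟨w, hw, hmw⟩ := mem_cl_iff.1 (mem_cl_of_step_L hC3 hC4 hm)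
  exact ⟨w, hw, leSpec_trans hxm hmw⟩

theorem C5.induction (hC5 : C5 U s L) {P : X → Prop} (succ : ∀ x, P x → P (s x))
    (limit : ∀ I (hI : I ∈ LDom U s), (∀ x ∈ I, P x) → P (L I hI)) (x : X) : P x :=
  Set.eq_univ_iff_forall.1 (hC5 {x | P x} succ limit) x

theorem wellFounded_step (hC3 : C3 U s L) (hC4 : C4 U s L) (hC5 : C5 U s L) :
    WellFounded (Step U s L) := by
  refine ⟨hC5.induction (fun x hx => ⟨_, fun z hz => ?_⟩) (fun K hK hacc => ⟨_, fun z hz => ?_⟩)⟩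
  · rwa [(step_succ_iff hC3 hC4.1).1 hz]
  · obtain ⟨w, hw, hzw⟩ := mem_cl_iff_reflTransGen.1 (mem_cl_of_step_L hC3 hC4 hz)
    clear hz
    induction hzw using ReflTransGen.head_induction_on with
    | refl => exact hacc w hw
    | head hstep _ ih => exact ih.inv hstep

theorem eq_succ_or_eq_L (hC5 : C5 U s L) (x : X) :
    (∃ z, s z = x) ∨ ∃ I, ∃ hI : I ∈ LDom U s, L I hI = x :=
  hC5.induction (P := fun x => (∃ z, s z = x) ∨ ∃ I, ∃ hI : I ∈ LDom U s, L I hI = x)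
    (fun y _ => Or.inl ⟨y, rfl⟩) (fun I hI _ => Or.inr ⟨I, hI, rfl⟩) x

section WellFounded

variable (hwf : WellFounded (Step U s L))
include hwf

theorem leSpec_antisymm {x y : X} (hxy : x ≼ y) (hyx : y ≼ x) : x = y := by
  by_contra hne
  obtain rfl | hxy := reflTransGen_iff_eq_or_transGen.1 (leSpec_iff_reflTransGen.1 hxy)
  · exact hne rfl
  obtain rfl | hyx := reflTransGen_iff_eq_or_transGen.1 (leSpec_iff_reflTransGen.1 hyx)
  · exact hne rfl
  exact hwf.transGen.irrefl.irrefl x (hxy.trans hyx)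

theorem lt_of_le_of_lt {x y z : X} (hxy : x ≼ y) (hyz : y ≺ z) : x ≺ z :=
  ⟨leSpec_trans hxy hyz.1, fun h => hyz.2 (leSpec_antisymm hwf hyz.1 (h ▸ hxy))⟩

theorem lt_of_lt_of_le {x y z : X} (hxy : x ≺ y) (hyz : y ≼ z) : x ≺ z :=
  ⟨leSpec_trans hxy.1 hyz, fun h => hxy.2 (leSpec_antisymm hwf hxy.1 (h ▸ hyz))⟩

theorem lt_succ (x : X) : x ≺ s x :=
  ⟨leSpec_succ x, fun h => hwf.irrefl.irrefl x (Or.inl h.symm)⟩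

theorem isSuccOf_succ (x : X) : IsSuccOf (leSpec U s L) x (s x) :=
  ⟨fun _ hy => hy ▸ lt_succ hwf x, fun _ hc => succ_le_of_lt (hc x rfl)⟩

theorem lt_of_le_of_succClosed {I : Set X} (hI : SuccClosed s I) {c : X} (hc : ∀ w ∈ I, w ≼ c) :
    ∀ w ∈ I, w ≺ c :=
  fun w hw => lt_of_lt_of_le hwf (lt_succ hwf w) (hc _ (hI w hw))

theorem lt_succ_iff (hC3 : C3 U s L) (hs : Function.Injective s) {x z : X} :
    x ≺ s z ↔ x ≼ z :=
  ⟨fun h => ((le_succ_iff hC3 hs).1 h.1).resolve_left h.2,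
    fun h => lt_of_le_of_lt hwf h (lt_succ hwf z)⟩

theorem cl_eq_setOf_lt_L (hC3 : C3 U s L) (hC4 : C4 U s L) {K : Set X} (hK : K ∈ LDom U s) :
    cl U s L K = {x | x ≺ L K hK} := by
  ext x
  refine mem_cl_iff.trans
    ⟨fun ⟨w, hw, hxw⟩ => ?_, fun h => ((le_L_iff hC3 hC4).1 h.1).resolve_left h.2⟩
  refine lt_of_le_of_lt hwf hxw ⟨leSpec_L_of_mem hw, fun h => (hC3 K hK).2 ?_⟩
  exact h ▸ hK.1 w hw

end WellFounded

section Axioms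

variable (hC2 : C2 U s L) (hC3 : C3 U s L) (hC4 : C4 U s L) (hC5 : C5 U s L)
include hC2 hC3 hC4 hC5

theorem L_le_of_forall_lt {K : Set X} {hK : K ∈ LDom U s}
    (hcomp : ∀ w ∈ K, ∀ x, w ≼ x ∨ x ≼ w) (x : X) (hx : ∀ w ∈ K, w ≺ x) : L K hK ≼ x := by
  have hwf := wellFounded_step hC3 hC4 hC5
  induction x using hwf.induction with
  | _ x ih =>
  obtain ⟨z, rfl⟩ | ⟨M, hM, rfl⟩ := eq_succ_or_eq_L hC5 x
  · have hz : ∀ w ∈ K, w ≺ z := fun w hw =>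
      ⟨(lt_succ_iff hwf hC3 hC4.1).1 (hx w hw), fun h => (hx (s w) (hK.1 w hw)).2 (h ▸ rfl)⟩
    exact leSpec_trans (ih z (Or.inl rfl) hz) (leSpec_succ z)
  · have hKM : K ⊆ cl U s L M := fun w hw => (cl_eq_setOf_lt_L hwf hC3 hC4 hM).symm ▸ hx w hw
    by_cases hMK : M ⊆ cl U s L K
    · have hcl : cl U s L K = cl U s L M :=
        (cl_subset (isClosedSub_cl M) hKM).antisymm (cl_subset (isClosedSub_cl K) hMK)
      exact hC2 K M hK hM hcl ▸ leSpec_refl _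
    -- otherwise some `u ∈ M` lies outside `cl K`, hence strictly above all of `K`
    · obtain ⟨u, huM, huK⟩ := Set.not_subset.1 hMK
      have hKu : ∀ w ∈ K, w ≺ u := fun w hw => (hcomp w hw u).elim
        (fun h => ⟨h, fun e => huK (e ▸ subset_cl K hw)⟩)
        (fun h => absurd (mem_cl_iff.2 ⟨w, hw, h⟩) huK)
      exact leSpec_trans (ih u (Or.inr ⟨M, hM, huM, rfl⟩) hKu) (leSpec_L_of_mem huM)

theorem leSpec_total (x y : X) : x ≼ y ∨ y ≼ x := by
  induction x using (wellFounded_step hC3 hC4 hC5).induction generalizing y with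
  | _ x ih =>
  obtain ⟨z, rfl⟩ | ⟨K, hK, rfl⟩ := eq_succ_or_eq_L hC5 x
  · obtain hzy | hyz := ih z (Or.inl rfl) y
    · by_cases hzy' : z = y
      · exact Or.inr (hzy' ▸ leSpec_succ z)
      · exact Or.inl (succ_le_of_lt ⟨hzy, hzy'⟩)
    · exact Or.inr (leSpec_trans hyz (leSpec_succ z))
  · by_cases hyK : ∃ w ∈ K, y ≼ w
    · obtain ⟨w, hw, hyw⟩ := hyK
      exact Or.inr (leSpec_trans hyw (leSpec_L_of_mem hw))
    · push Not at hyK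
      refine Or.inl (L_le_of_forall_lt hC2 hC3 hC4 hC5
        (fun w hw => ih w (Or.inr ⟨K, hK, hw, rfl⟩)) y fun w hw => ?_)
      exact ⟨(ih w (Or.inr ⟨K, hK, hw, rfl⟩) y).resolve_right (hyK w hw),
        fun h => hyK w hw (h ▸ leSpec_refl w)⟩

theorem isIncJoin_of_cl_eq {S : Set X} {b : X} (h : cl U s L S = {x | x ≺ b}) :
    IsIncJoin (leSpec U s L) S b := by
  refine ⟨fun y hy => h.subset (subset_cl S hy), fun c hc => ?_⟩
  obtain hbc | hcb := leSpec_total hC2 hC3 hC4 hC5 b c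
  · exact hbc
  by_cases hcb' : c = b
  · exact hcb' ▸ leSpec_refl c
  obtain ⟨v, hv, hcv⟩ := mem_cl_iff.1 (h.symm.subset ⟨hcb, hcb'⟩)
  exact absurd rfl (lt_of_le_of_lt (wellFounded_step hC3 hC4 hC5) hcv (hc v hv)).2

theorem isIncJoin_L {K : Set X} (hK : K ∈ LDom U s) : IsIncJoin (leSpec U s L) K (L K hK) :=
  isIncJoin_of_cl_eq hC2 hC3 hC4 hC5 (cl_eq_setOf_lt_L (wellFounded_step hC3 hC4 hC5) hC3 hC4 hK)

theorem isJoin_L {K : Set X} (hK : K ∈ LDom U s) : IsJoin (leSpec U s L) K (L K hK) :=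
  ⟨fun _ hy => leSpec_L_of_mem hy, fun c hc => (isIncJoin_L hC2 hC3 hC4 hC5 hK).2 c
    (lt_of_le_of_succClosed (wellFounded_step hC3 hC4 hC5) hK.1 hc)⟩

end Axioms

theorem not_exists_isSuccOf_iff (hC3 : C3 U s L) (hC4 : C4 U s L) (hC5 : C5 U s L) (x : X) :
    (¬ ∃ y, IsSuccOf (leSpec U s L) y x) ↔ ∃ I, ∃ hI : I ∈ LDom U s, L I hI = x := by
  have hwf := wellFounded_step hC3 hC4 hC5
  refine ⟨fun h => (eq_succ_or_eq_L hC5 x).resolve_left ?_, ?_⟩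
  · rintro ⟨z, rfl⟩
    exact h ⟨z, isSuccOf_succ hwf z⟩
  · rintro ⟨I, hI, rfl⟩ ⟨y, hy⟩
    exact (hC3 I hI).1 y (IsIncJoin.unique (leSpec_antisymm hwf) (isSuccOf_succ hwf y) hy)

theorem cl_eq_biUnion (K : Set X) : cl U s L K = ⋃ w ∈ K, {x | x ≼ w} := by
  ext x
  simp [mem_cl_iff]

section Small

variable (hU : IsUniverse U) (hC3 : C3 U s L) (hC4 : C4 U s L) (hC5 : C5 U s L)
include hU hC3 hC4 hC5

theorem smallSet_setOf_le (x : X) : SmallSet U {y | y ≼ x} := by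
  induction x using (wellFounded_step hC3 hC4 hC5).induction with
  | _ x ih =>
  obtain ⟨z, rfl⟩ | ⟨K, hK, rfl⟩ := eq_succ_or_eq_L hC5 x
  · have hset : {y | y ≼ s z} = insert (s z) {y | y ≼ z} := Set.ext fun y => le_succ_iff hC3 hC4.1
    rw [hset]
    exact (ih z (Or.inl rfl)).insert hU _
  · have hset : {y | y ≼ L K hK} = insert (L K hK) (cl U s L K) :=
      Set.ext fun y => (le_L_iff hC3 hC4).trans (or_congr_right mem_cl_iff.symm)
    rw [hset, cl_eq_biUnion]
    exact (hK.2.biUnion hU fun w hw => ih w (Or.inr ⟨K, hK, hw, rfl⟩)).insert hU _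

theorem smallSet_cl {K : Set X} (hK : SmallSet U K) : SmallSet U (cl U s L K) :=
  cl_eq_biUnion (s := s) (L := L) K ▸ hK.biUnion hU fun w _ => smallSet_setOf_le hU hC3 hC4 hC5 w

theorem exists_cl_eq_setOf_lt (hC2 : C2 U s L) {S : Set X} (hS : SmallSet U S) :
    ∃ b, cl U s L S = {x | x ≺ b} := by
  have hwf := wellFounded_step hC3 hC4 hC5
  by_cases hmax : ∃ m ∈ S, ∀ y ∈ S, y ≼ m
  · obtain ⟨m, hm, hmax⟩ := hmax
    refine ⟨s m, Set.ext fun x => ?_⟩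
    rw [mem_cl_iff, Set.mem_ofPred_eq, lt_succ_iff hwf hC3 hC4.1]
    exact ⟨fun ⟨v, hv, hxv⟩ => leSpec_trans hxv (hmax v hv), fun h => ⟨m, hm, h⟩⟩
  · push Not at hmax
    have hsucc : SuccClosed s (cl U s L S) := fun x hx => by
      obtain ⟨v, hv, hxv⟩ := mem_cl_iff.1 hx
      obtain ⟨v', hv', hv'v⟩ := hmax v hv
      have hvv' : v ≺ v' := ⟨(leSpec_total hC2 hC3 hC4 hC5 v v').resolve_right hv'v,
        fun h => hv'v (h ▸ leSpec_refl v)⟩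
      exact mem_cl_iff.2 ⟨v', hv', succ_le_of_lt (lt_of_le_of_lt hwf hxv hvv')⟩
    exact ⟨_, (cl_cl S).symm.trans
      (cl_eq_setOf_lt_L hwf hC3 hC4 ⟨hsucc, smallSet_cl hU hC3 hC4 hC5 hS⟩)⟩

end Small

end SpecializationOrder

theorem stmt_18 (U : ZFSet) (hU : IsUniverse U) {X : Type*}
    (s : X → X) (L : ∀ I ∈ LDom U s, X) (hC2 : C2 U s L)
    (hC3 : C3 U s L) (hC4 : C4 U s L) (hC5 : C5 U s L) :
    IsOrdinalSystem U (leSpec U s L) ∧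
    (∀ x : X, IsSuccOf (leSpec U s L) x (s x)) ∧
    (∀ I (h : I ∈ LDom U s),
      IsJoin (leSpec U s L) I (L I h) ∧ IsIncJoin (leSpec U s L) I (L I h)) ∧
    (∀ x : X, (¬ ∃ y, IsSuccOf (leSpec U s L) y x) ↔
      ∃ I, ∃ h : I ∈ LDom U s, L I h = x) ∧
    (∀ I : Set X, SmallSet U I → ∀ b : X, IsIncJoin (leSpec U s L) I b →
      cl U s L I = lowerComp (leSpec U s L) ({b} : Set X)) := by
  have hwf := wellFounded_step hC3 hC4 hC5
  have hincJoin (S : Set X) (hS : SmallSet U S) :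
      ∃ b, cl U s L S = {x | ltR (leSpec U s L) x b} ∧ IsIncJoin (leSpec U s L) S b :=
    (exists_cl_eq_setOf_lt hU hC3 hC4 hC5 hC2 hS).imp fun _ hb =>
      ⟨hb, isIncJoin_of_cl_eq hC2 hC3 hC4 hC5 hb⟩
  refine ⟨⟨?_, ?_, ?_⟩, isSuccOf_succ hwf, fun I hI => ⟨isJoin_L hC2 hC3 hC4 hC5 hI,
    isIncJoin_L hC2 hC3 hC4 hC5 hI⟩, not_exists_isSuccOf_iff hC3 hC4 hC5, ?_⟩
  · exact { refl := leSpec_refl, trans := fun _ _ _ => leSpec_trans,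
            antisymm := fun _ _ => leSpec_antisymm hwf }
  · rintro S ⟨y, hy⟩
    exact (smallSet_setOf_le hU hC3 hC4 hC5 y).mono hU fun x hx => (hx y hy).1
  · exact fun S hS => (hincJoin S hS).imp fun _ => And.right
  · intro I hI b hb
    obtain ⟨b', hcl, hb'⟩ := hincJoin I hI
    rw [lowerComp_singleton, hcl, IsIncJoin.unique (leSpec_antisymm hwf) hb hb']

end Paper
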